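/- arXiv:2302.02360 — 3 statements merged into one kernel-verified Lean document; each statement's English description precedes it below -/
import Mathlib

section
/- Let ψ : ℝ → ℝ ∪ {∞} be a proper lower semicontinuous convex function with superlinear growth and dom(ψ) ⊂ [0,∞), and define h(τ) = max{s ∈ dom(ψ) : τ ∈ ∂ψ(s)}. Then h is continuous on ℝ if and only if ψ is strictly convex on its domain. -/
open Set Filter
open Topology

/-- The subdifferential of `ψ` (with domain `D`) at `s`. -/
def subdiffAt (D : Set ℝ) (ψ : ℝ → ℝ) (s : ℝ) : Set ℝ :=
  {τ : ℝ | ∀ t ∈ D, τ * (t - s) ≤ ψ t - ψ s}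

private lemma subdiff_mono {D : Set ℝ} {ψ : ℝ → ℝ} {τ₁ τ₂ s₁ s₂ : ℝ}
    (h1 : s₁ ∈ D) (h2 : s₂ ∈ D) (m1 : τ₁ ∈ subdiffAt D ψ s₁) (m2 : τ₂ ∈ subdiffAt D ψ s₂)
    (hlt : τ₁ < τ₂) : s₁ ≤ s₂ := by
  by_contra hc
  push_neg at hc
  have a1 := m1 s₂ h2
  have a2 := m2 s₁ h1
  nlinarith [mul_pos (sub_pos.2 hlt) (sub_pos.2 hc)]

private lemma subdiff_uniq {D : Set ℝ} {ψ : ℝ → ℝ} (hD : Convex ℝ D)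
    (hsc : StrictConvexOn ℝ D ψ) {τ s₁ s₂ : ℝ}
    (h1 : s₁ ∈ D) (h2 : s₂ ∈ D) (m1 : τ ∈ subdiffAt D ψ s₁) (m2 : τ ∈ subdiffAt D ψ s₂) :
    s₁ = s₂ := by
  by_contra hne
  have a1 := m1 s₂ h2
  have a2 := m2 s₁ h1
  -- equality case: ψ s₂ - ψ s₁ = τ * (s₂ - s₁)
  have E : ψ s₂ - ψ s₁ = τ * (s₂ - s₁) := by nlinarith
  have hmD : (1/2 : ℝ) • s₁ + (1/2 : ℝ) • s₂ ∈ D :=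
    hD h1 h2 (by norm_num) (by norm_num) (by norm_num)
  have hstrict := hsc.2 h1 h2 hne (by norm_num : (0:ℝ) < 1/2) (by norm_num : (0:ℝ) < 1/2)
    (by norm_num)
  simp only [smul_eq_mul] at hmD hstrict
  have a3 := m1 _ hmD
  nlinarith

private lemma exists_subgradient {D : Set ℝ} {ψ : ℝ → ℝ} (hconv : ConvexOn ℝ D ψ)
    {s u v : ℝ} (hu : u ∈ D) (hv : v ∈ D) (hs : s ∈ D) (hus : u < s) (hsv : s < v) :
    ∃ τ, τ ∈ subdiffAt D ψ s := by
  set S : Set ℝ := (fun t => (ψ s - ψ t) / (s - t)) '' (D ∩ Iio s) with hS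
  have hSne : S.Nonempty := ⟨_, ⟨u, ⟨hu, hus⟩, rfl⟩⟩
  have hub : ∀ r ∈ S, r ≤ (ψ v - ψ s) / (v - s) := by
    rintro r ⟨t, ⟨ht, hts⟩, rfl⟩
    exact hconv.slope_mono_adjacent ht hv hts hsv
  have hbdd : BddAbove S := ⟨_, hub⟩
  refine ⟨sSup S, fun t ht => ?_⟩
  rcases lt_trichotomy t s with hts | rfl | hst
  · have h1 : (ψ s - ψ t) / (s - t) ≤ sSup S := le_csSup hbdd ⟨t, ⟨ht, hts⟩, rfl⟩
    have h2 : ψ s - ψ t ≤ sSup S * (s - t) := by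
      rw [div_le_iff₀ (by linarith : (0:ℝ) < s - t)] at h1
      linarith
    have h3 : sSup S * (t - s) = -(sSup S * (s - t)) := by ring
    linarith
  · simp
  · have h1 : sSup S ≤ (ψ t - ψ s) / (t - s) := by
      refine csSup_le hSne ?_
      rintro r ⟨w, ⟨hw, hws⟩, rfl⟩
      exact hconv.slope_mono_adjacent hw ht hws hst
    rw [le_div_iff₀ (by linarith : (0:ℝ) < t - s)] at h1
    linarith

private lemma not_cont_aux {D : Set ℝ} {ψ : ℝ → ℝ} (hint : Convex ℝ D)
    (hconv : ConvexOn ℝ D ψ) {h : ℝ → ℝ}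
    (hh : ∀ τ : ℝ, IsGreatest {s : ℝ | s ∈ D ∧ τ ∈ subdiffAt D ψ s} (h τ))
    {x y a b : ℝ} (hx : x ∈ D) (hy : y ∈ D) (hlt : x < y) (ha : 0 < a) (hb : 0 < b)
    (hab : a + b = 1) (heq : ψ (a * x + b * y) = a * ψ x + b * ψ y) : ¬ Continuous h := by
  have ha' : a = 1 - b := by linarith
  subst ha'
  set z : ℝ := (1 - b) * x + b * y with hz
  set τ₀ : ℝ := (ψ y - ψ x) / (y - x) with hτ₀
  have hyx : (0:ℝ) < y - x := by linarith
  have hzx : x < z := by nlinarith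
  have hzy : z < y := by nlinarith
  have hzD : z ∈ D := hint.ordConnected.out hx hy ⟨hzx.le, hzy.le⟩
  have hd1 : z - x = b * (y - x) := by rw [hz]; ring
  have hd2 : y - z = (1 - b) * (y - x) := by rw [hz]; ring
  have hn1 : ψ z - ψ x = b * (ψ y - ψ x) := by rw [heq]; ring
  have hn2 : ψ y - ψ z = (1 - b) * (ψ y - ψ x) := by rw [heq]; ring
  have hb1 : (0:ℝ) < 1 - b := ha
  have szy : (ψ y - ψ z) / (y - z) = τ₀ := by
    rw [hn2, hd2, mul_div_mul_left _ _ (ne_of_gt hb1)]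
  have sxz : (ψ x - ψ z) / (x - z) = τ₀ := by
    have e1 : ψ x - ψ z = -(b * (ψ y - ψ x)) := by linarith
    have e2 : x - z = -(b * (y - x)) := by linarith
    rw [e1, e2, neg_div_neg_eq, mul_div_mul_left _ _ (ne_of_gt hb)]
  -- τ₀ is a subgradient at z
  have hsub : τ₀ ∈ subdiffAt D ψ z := by
    intro t ht
    rcases lt_trichotomy t z with htz | rfl | hzt
    · have := hconv.secant_mono hzD ht hy (ne_of_lt htz) (ne_of_gt hzy)
        (le_of_lt (htz.trans hzy))
      rw [szy] at this
      rw [div_le_iff_of_neg (by linarith : t - z < 0)] at this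
      linarith
    · simp
    · have := hconv.secant_mono hzD hx ht (ne_of_lt hzx) (ne_of_gt hzt)
        (le_of_lt (hzx.trans hzt))
      rw [sxz] at this
      rw [le_div_iff₀ (by linarith : (0:ℝ) < t - z)] at this
      linarith
  -- τ₀ is a subgradient at x
  have e1 : τ₀ * (y - x) = ψ y - ψ x := div_mul_cancel₀ _ (ne_of_gt hyx)
  have e2 : τ₀ * (z - x) = ψ z - ψ x := by
    rw [hn1, hd1, show τ₀ * (b * (y - x)) = b * (τ₀ * (y - x)) by ring, e1]
  have hsubx : τ₀ ∈ subdiffAt D ψ x := by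
    intro t ht
    have h1 := hsub t ht
    have h2 : τ₀ * (t - x) = τ₀ * (t - z) + τ₀ * (z - x) := by ring
    linarith
  -- h has a jump at τ₀
  have hge_z : z ≤ h τ₀ := (hh τ₀).2 ⟨hzD, hsub⟩
  have hle_x : ∀ τ < τ₀, h τ ≤ x := by
    intro τ hτ
    by_contra hc
    push_neg at hc
    have hsD := (hh τ).1.1
    have i1 := (hh τ).1.2 x hx
    have i2 := hsubx (h τ) hsD
    nlinarith [mul_pos (sub_pos.2 hτ) (sub_pos.2 hc)]
  intro hcont
  have ht : Tendsto h (𝓝[<] τ₀) (𝓝 (h τ₀)) :=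
    (hcont.tendsto τ₀).mono_left nhdsWithin_le_nhds
  have hle : h τ₀ ≤ x :=
    le_of_tendsto ht (eventually_nhdsWithin_of_forall (fun τ hτ => hle_x τ hτ))
  linarith

/-- With `ψ` proper lsc convex, superlinear, `dom ψ = D ⊆ [0,∞)`
an interval not reduced to a point, and `h(τ) = max{s ∈ D : τ ∈ ∂ψ(s)}`,
the function `h` is continuous on `ℝ` iff `ψ` is strictly convex on `D`. -/
theorem h_continuous_iff_strictly_convex
    (D : Set ℝ) (ψ : ℝ → ℝ)
    (hD : D ⊆ Set.Ici (0 : ℝ))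
    (hint : Convex ℝ D)
    (hne : ∃ a ∈ D, ∃ b ∈ D, a ≠ b)
    (hconv : ConvexOn ℝ D ψ)
    (hlsc : LowerSemicontinuousOn ψ D)
    (hsl : Tendsto (fun s => ψ s / s) (atTop ⊓ Filter.principal D) atTop)
    (h : ℝ → ℝ)
    (hh : ∀ τ : ℝ, IsGreatest {s : ℝ | s ∈ D ∧ τ ∈ subdiffAt D ψ s} (h τ)) :
    Continuous h ↔ StrictConvexOn ℝ D ψ := by
  constructor
  · -- continuous ⟹ strictly convex
    intro hcont
    refine ⟨hint, fun x hx y hy hxy a b ha hb hab => ?_⟩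
    by_contra hc
    push_neg at hc
    have hle := hconv.2 hx hy ha.le hb.le hab
    simp only [smul_eq_mul] at hc hle ⊢
    have heq : ψ (a * x + b * y) = a * ψ x + b * ψ y := le_antisymm hle hc
    rcases hxy.lt_or_gt with hlt | hlt
    · exact not_cont_aux hint hconv hh hx hy hlt ha hb hab heq hcont
    · refine not_cont_aux hint hconv hh hy hx hlt hb ha (by linarith) ?_ hcont
      rw [show b * y + a * x = a * x + b * y by ring, heq]; ring
  · -- strictly convex ⟹ continuous
    intro hsc
    have mono : Monotone h := by
      intro τ₁ τ₂ hle
      rcases eq_or_lt_of_le hle with rfl | hlt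
      · exact le_refl _
      · exact subdiff_mono (hh τ₁).1.1 (hh τ₂).1.1 (hh τ₁).1.2 (hh τ₂).1.2 hlt
    have hrange : ∀ z u v : ℝ, u ∈ D → v ∈ D → u < z → z < v → ∃ σ, h σ = z := by
      intro z u v hu hv huz hzv
      have hzD : z ∈ D := hint.ordConnected.out hu hv ⟨huz.le, hzv.le⟩
      obtain ⟨τ, hτ⟩ := exists_subgradient hconv hu hv hzD huz hzv
      exact ⟨τ, subdiff_uniq hint hsc (hh τ).1.1 hzD (hh τ).1.2 hτ⟩
    refine continuous_iff_continuousAt.2 fun τ₀ => ?_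
    rw [continuousAt_iff_continuous_left_right]
    constructor
    · -- left continuity
      rw [← continuousWithinAt_Iio_iff_Iic]
      have Htd := mono.tendsto_nhdsLT τ₀
      have hbdd : BddAbove (h '' Iio τ₀) := mono.map_bddAbove bddAbove_Iio
      have hLle : sSup (h '' Iio τ₀) ≤ h τ₀ := by
        refine csSup_le ⟨h (τ₀ - 1), ⟨τ₀ - 1, by simp, rfl⟩⟩ ?_
        rintro r ⟨σ, hσ, rfl⟩
        exact mono (le_of_lt hσ)
      have hge : h (τ₀ - 1) ≤ sSup (h '' Iio τ₀) :=
        le_csSup hbdd ⟨τ₀ - 1, by simp, rfl⟩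
      have hEq : sSup (h '' Iio τ₀) = h τ₀ := by
        rcases eq_or_lt_of_le hLle with he | hlt
        · exact he
        · exfalso
          set L := sSup (h '' Iio τ₀) with hL
          obtain ⟨σ, hσ⟩ := hrange ((L + h τ₀) / 2) (h (τ₀ - 1)) (h τ₀)
            (hh _).1.1 (hh _).1.1 (by linarith) (by linarith)
          rcases lt_or_ge σ τ₀ with hσlt | hσge
          · have : h σ ≤ L := le_csSup hbdd ⟨σ, hσlt, rfl⟩
            rw [hσ] at this; linarith
          · have : h τ₀ ≤ h σ := mono hσge
            rw [hσ] at this; linarith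
      rw [ContinuousWithinAt, ← hEq]
      exact Htd
    · -- right continuity
      rw [← continuousWithinAt_Ioi_iff_Ici]
      have Htd := mono.tendsto_nhdsGT τ₀
      have hbdd : BddBelow (h '' Ioi τ₀) := mono.map_bddBelow bddBelow_Ioi
      have hRge : h τ₀ ≤ sInf (h '' Ioi τ₀) := by
        refine le_csInf ⟨h (τ₀ + 1), ⟨τ₀ + 1, by simp, rfl⟩⟩ ?_
        rintro r ⟨σ, hσ, rfl⟩
        exact mono (le_of_lt hσ)
      have hle : sInf (h '' Ioi τ₀) ≤ h (τ₀ + 1) :=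
        csInf_le hbdd ⟨τ₀ + 1, by simp, rfl⟩
      have hEq : sInf (h '' Ioi τ₀) = h τ₀ := by
        rcases eq_or_lt_of_le hRge with he | hlt
        · exact he.symm
        · exfalso
          set R := sInf (h '' Ioi τ₀) with hR
          obtain ⟨σ, hσ⟩ := hrange ((h τ₀ + R) / 2) (h τ₀) (h (τ₀ + 1))
            (hh _).1.1 (hh _).1.1 (by linarith) (by linarith)
          rcases le_or_gt σ τ₀ with hσle | hσgt
          · have : h σ ≤ h τ₀ := mono hσle
            rw [hσ] at this; linarith
          · have : R ≤ h σ := csInf_le hbdd ⟨σ, hσgt, rfl⟩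
            rw [hσ] at this; linarith
      rw [ContinuousWithinAt, ← hEq]
      exact Htd
end

section
/- Let ψ : ℝ → ℝ ∪ {∞} be a proper lower semicontinuous convex function with superlinear growth and dom(ψ) ⊂ [0,∞), and define h(τ) = max{s ∈ dom(ψ) : τ ∈ ∂ψ(s)}. Then h is Lipschitz continuous on ℝ if and only if inf { (d₋ψ(s₂) - d₊ψ(s₁))/(s₂ - s₁) : s₁, s₂ ∈ dom(ψ), s₁ < s₂ } > 0. -/
open Set Filter

/-- The left derivative `d₋ψ(s)` as an extended real. -/
noncomputable def dMinus (D : Set ℝ) (ψ : ℝ → ℝ) (s : ℝ) : EReal :=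
  sSup ((fun t => (((ψ s - ψ t) / (s - t) : ℝ) : EReal)) '' (D ∩ Set.Iio s))

/-- The right derivative `d₊ψ(s)` as an extended real. -/
noncomputable def dPlus (D : Set ℝ) (ψ : ℝ → ℝ) (s : ℝ) : EReal :=
  sInf ((fun t => (((ψ t - ψ s) / (t - s) : ℝ) : EReal)) '' (D ∩ Set.Ioi s))

section Aux

variable (D : Set ℝ) (ψ : ℝ → ℝ)

lemma dPlus_le_slope {s t : ℝ} (ht : t ∈ D) (hst : s < t) :
    dPlus D ψ s ≤ (((ψ t - ψ s) / (t - s) : ℝ) : EReal) :=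
  sInf_le ⟨t, ⟨ht, hst⟩, rfl⟩

lemma slope_le_dMinus {s t : ℝ} (ht : t ∈ D) (hts : t < s) :
    (((ψ s - ψ t) / (s - t) : ℝ) : EReal) ≤ dMinus D ψ s :=
  le_sSup ⟨t, ⟨ht, hts⟩, rfl⟩

lemma coe_le_dPlus {τ s : ℝ} (hτ : τ ∈ subdiffAt D ψ s) :
    (τ : EReal) ≤ dPlus D ψ s := by
  refine le_sInf ?_
  rintro x ⟨t, ⟨ht, hst⟩, rfl⟩
  rw [EReal.coe_le_coe_iff, le_div_iff₀ (by simpa using sub_pos.mpr (show s < t from hst))]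
  exact hτ t ht

lemma dMinus_le_coe {τ s : ℝ} (hτ : τ ∈ subdiffAt D ψ s) :
    dMinus D ψ s ≤ (τ : EReal) := by
  refine sSup_le ?_
  rintro x ⟨t, ⟨ht, hts⟩, rfl⟩
  rw [EReal.coe_le_coe_iff, div_le_iff₀ (by simpa using sub_pos.mpr (show t < s from hts))]
  nlinarith [hτ t ht]

lemma mem_subdiff_of_between {τ s : ℝ} (hs : s ∈ D)
    (h1 : dMinus D ψ s ≤ (τ : EReal)) (h2 : (τ : EReal) ≤ dPlus D ψ s) :
    τ ∈ subdiffAt D ψ s := by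
  intro t ht
  rcases lt_trichotomy t s with hts | rfl | hst
  · have hsl := (slope_le_dMinus D ψ ht hts).trans h1
    rw [EReal.coe_le_coe_iff, div_le_iff₀ (by linarith)] at hsl
    nlinarith
  · simp
  · have hsl := h2.trans (dPlus_le_slope D ψ ht hst)
    rw [EReal.coe_le_coe_iff, le_div_iff₀ (by linarith)] at hsl
    exact hsl

lemma dMinus_le_dPlus (hconv : ConvexOn ℝ D ψ) {s : ℝ} :
    dMinus D ψ s ≤ dPlus D ψ s := by
  refine sSup_le ?_
  rintro x ⟨t, ⟨ht, hts⟩, rfl⟩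
  refine le_sInf ?_
  rintro y ⟨u, ⟨hu, hsu⟩, rfl⟩
  exact EReal.coe_le_coe_iff.mpr (hconv.slope_mono_adjacent ht hu hts hsu)

end Aux

/-- With `ψ` proper lsc convex, superlinear, `dom ψ = D ⊆ [0,∞)`
an interval not reduced to a point and `h(τ) = max{s ∈ D : τ ∈ ∂ψ(s)}`, the
function `h` is Lipschitz on `ℝ` iff
`inf{(d₋ψ(s₂) - d₊ψ(s₁))/(s₂ - s₁) : s₁ < s₂ in D} > 0`. -/
theorem h_lipschitz_iff
    (D : Set ℝ) (ψ : ℝ → ℝ)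
    (hD : D ⊆ Set.Ici (0 : ℝ))
    (hint : Convex ℝ D)
    (hne : ∃ a ∈ D, ∃ b ∈ D, a ≠ b)
    (hconv : ConvexOn ℝ D ψ)
    (hlsc : LowerSemicontinuousOn ψ D)
    (hsl : Tendsto (fun s => ψ s / s) (atTop ⊓ Filter.principal D) atTop)
    (h : ℝ → ℝ)
    (hh : ∀ τ : ℝ, IsGreatest {s : ℝ | s ∈ D ∧ τ ∈ subdiffAt D ψ s} (h τ)) :
    (∃ K : NNReal, LipschitzWith K h) ↔
      ∃ c : ℝ, 0 < c ∧ ∀ s₁ ∈ D, ∀ s₂ ∈ D, s₁ < s₂ →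
        ((c * (s₂ - s₁) : ℝ) : EReal) ≤ dMinus D ψ s₂ - dPlus D ψ s₁ := by
  constructor
  · rintro ⟨K, hK⟩
    refine ⟨1 / ((K : ℝ) + 1), by positivity, ?_⟩
    intro s₁ hs₁ s₂ hs₂ hlt
    have hPle : dPlus D ψ s₁ ≤ (((ψ s₂ - ψ s₁) / (s₂ - s₁) : ℝ) : EReal) :=
      dPlus_le_slope D ψ hs₂ hlt
    have hMge : (((ψ s₂ - ψ s₁) / (s₂ - s₁) : ℝ) : EReal) ≤ dMinus D ψ s₂ :=
      slope_le_dMinus D ψ hs₁ hlt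
    have hPtop : dPlus D ψ s₁ ≠ ⊤ := (hPle.trans_lt (EReal.coe_lt_top _)).ne
    have hMbot : dMinus D ψ s₂ ≠ ⊥ := ((EReal.bot_lt_coe _).trans_le hMge).ne'
    by_cases hPbot : dPlus D ψ s₁ = ⊥
    · rw [hPbot, EReal.sub_bot hMbot]; exact le_top
    by_cases hMtop : dMinus D ψ s₂ = ⊤
    · rw [hMtop, ← EReal.coe_toReal hPtop hPbot, EReal.top_sub_coe]; exact le_top
    set a := (dPlus D ψ s₁).toReal with ha
    set b := (dMinus D ψ s₂).toReal with hb
    have haE : ((a : ℝ) : EReal) = dPlus D ψ s₁ := EReal.coe_toReal hPtop hPbot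
    have hbE : ((b : ℝ) : EReal) = dMinus D ψ s₂ := EReal.coe_toReal hMtop hMbot
    have hab : a ≤ b := by
      have h1 : ((a : ℝ) : EReal) ≤ ((b : ℝ) : EReal) := by
        rw [haE, hbE]; exact hPle.trans hMge
      exact EReal.coe_le_coe_iff.mp h1
    -- key fact 1 : for τ < a, h τ ≤ s₁
    have key1 : ∀ τ : ℝ, τ < a → h τ ≤ s₁ := by
      intro τ hτ
      by_contra hgt
      push_neg at hgt
      obtain ⟨⟨hmem, hsub⟩, -⟩ := hh τ
      have hchain : dPlus D ψ s₁ ≤ (τ : EReal) :=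
        (dPlus_le_slope D ψ hmem hgt).trans
          ((slope_le_dMinus D ψ hs₁ hgt).trans (dMinus_le_coe D ψ hsub))
      rw [← haE, EReal.coe_le_coe_iff] at hchain
      linarith
    -- key fact 2 : s₂ ≤ h b
    have key2 : s₂ ≤ h b := by
      refine (hh b).2 ⟨hs₂, mem_subdiff_of_between D ψ hs₂ hbE.ge ?_⟩
      exact hbE ▸ dMinus_le_dPlus D ψ hconv
    have hKbd : ∀ ε : ℝ, 0 < ε → s₂ - s₁ ≤ (K : ℝ) * (b - a) + (K : ℝ) * ε := by
      intro ε hε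
      have h1 : h (a - ε) ≤ s₁ := key1 _ (by linarith)
      have h2 := hK.dist_le_mul b (a - ε)
      rw [Real.dist_eq, Real.dist_eq] at h2
      have h3 : s₂ - s₁ ≤ h b - h (a - ε) := by linarith
      have h4 : h b - h (a - ε) ≤ |h b - h (a - ε)| := le_abs_self _
      have h5 : |b - (a - ε)| = b - a + ε := by
        rw [abs_of_nonneg (by linarith)]; ring
      rw [h5] at h2
      nlinarith
    have hmain : s₂ - s₁ ≤ (K : ℝ) * (b - a) := by
      by_contra hcon
      push_neg at hcon
      set g := s₂ - s₁ - (K : ℝ) * (b - a) with hg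
      have hg0 : 0 < g := by simp only [hg]; linarith
      have hε : (0 : ℝ) < g / (2 * ((K : ℝ) + 1)) := by positivity
      have h1 := hKbd _ hε
      have h2 : (K : ℝ) * (g / (2 * ((K : ℝ) + 1))) < g := by
        rw [show (K : ℝ) * (g / (2 * ((K : ℝ) + 1))) = g * ((K : ℝ) / (2 * ((K : ℝ) + 1))) by
          ring]
        refine mul_lt_of_lt_one_right hg0 ?_
        rw [div_lt_one (by positivity)]
        have := K.coe_nonneg
        linarith
      linarith
    have hfin : 1 / ((K : ℝ) + 1) * (s₂ - s₁) ≤ b - a := by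
      rw [one_div, inv_mul_le_iff₀ (by positivity)]
      nlinarith [K.coe_nonneg]
    rw [← haE, ← hbE, ← EReal.coe_sub]
    exact EReal.coe_le_coe_iff.mpr (by linarith)
  · rintro ⟨c, hc, hineq⟩
    refine ⟨⟨1 / c, by positivity⟩, ?_⟩
    have hmono : Monotone h := by
      intro x y hxy
      rcases eq_or_lt_of_le hxy with rfl | hlt
      · exact le_refl _
      by_contra hgt
      push_neg at hgt
      obtain ⟨⟨hxD, hxsub⟩, -⟩ := hh x
      obtain ⟨⟨hyD, hysub⟩, -⟩ := hh y
      have h1 := hxsub (h y) hyD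
      have h2 := hysub (h x) hxD
      nlinarith [mul_pos (sub_pos.mpr hlt) (sub_pos.mpr hgt)]
    have key : ∀ x y : ℝ, x ≤ y → h y - h x ≤ 1 / c * (y - x) := by
      intro x y hxy
      rcases eq_or_lt_of_le (hmono hxy) with heq | hlt
      · rw [← heq, sub_self]
        exact mul_nonneg (by positivity) (by linarith)
      obtain ⟨⟨hxD, hxsub⟩, -⟩ := hh x
      obtain ⟨⟨hyD, hysub⟩, -⟩ := hh y
      have hP : (x : EReal) ≤ dPlus D ψ (h x) := coe_le_dPlus D ψ hxsub
      have hM : dMinus D ψ (h y) ≤ (y : EReal) := dMinus_le_coe D ψ hysub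
      have hPle : dPlus D ψ (h x) ≤ (((ψ (h y) - ψ (h x)) / (h y - h x) : ℝ) : EReal) :=
        dPlus_le_slope D ψ hyD hlt
      have hMge : (((ψ (h y) - ψ (h x)) / (h y - h x) : ℝ) : EReal) ≤ dMinus D ψ (h y) :=
        slope_le_dMinus D ψ hxD hlt
      have hPtop : dPlus D ψ (h x) ≠ ⊤ := (hPle.trans_lt (EReal.coe_lt_top _)).ne
      have hPbot : dPlus D ψ (h x) ≠ ⊥ := ((EReal.bot_lt_coe _).trans_le hP).ne'
      have hMtop : dMinus D ψ (h y) ≠ ⊤ := (hM.trans_lt (EReal.coe_lt_top _)).ne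
      have hMbot : dMinus D ψ (h y) ≠ ⊥ := ((EReal.bot_lt_coe _).trans_le hMge).ne'
      set a := (dPlus D ψ (h x)).toReal with ha
      set b := (dMinus D ψ (h y)).toReal with hb
      have haE : ((a : ℝ) : EReal) = dPlus D ψ (h x) := EReal.coe_toReal hPtop hPbot
      have hbE : ((b : ℝ) : EReal) = dMinus D ψ (h y) := EReal.coe_toReal hMtop hMbot
      have hI := hineq (h x) hxD (h y) hyD hlt
      rw [← haE, ← hbE, ← EReal.coe_sub, EReal.coe_le_coe_iff] at hI
      have hxa : x ≤ a := by rw [← EReal.coe_le_coe_iff, haE]; exact hP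
      have hby : b ≤ y := by rw [← EReal.coe_le_coe_iff, hbE]; exact hM
      have hcmain : c * (h y - h x) ≤ y - x := by linarith
      rw [one_div, ← div_eq_inv_mul, le_div_iff₀ hc]
      nlinarith
    refine LipschitzWith.of_dist_le_mul ?_
    intro x y
    rcases le_total x y with hxy | hxy
    · rw [Real.dist_eq, Real.dist_eq, abs_sub_comm (h x), abs_sub_comm x,
        abs_of_nonneg (sub_nonneg.mpr (hmono hxy)), abs_of_nonneg (sub_nonneg.mpr hxy)]
      exact key x y hxy
    · rw [Real.dist_eq, Real.dist_eq,
        abs_of_nonneg (sub_nonneg.mpr (hmono hxy)), abs_of_nonneg (sub_nonneg.mpr hxy)]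
      exact key y x hxy
end

section
/- Let ψ : ℝ → ℝ ∪ {∞} be a proper lower semicontinuous convex function with superlinear growth, dom(ψ) ⊂ [0,∞) not reduced to a point, α = inf dom(ψ), and h(τ) = max{s ∈ dom(ψ) : τ ∈ ∂ψ(s)}. If d₊ψ(α) ≥ 0, then the function g(τ) = h(τ)·τ is non-decreasing on ℝ. -/
open Set Filter

/-- With `ψ` proper lsc convex, superlinear, `dom ψ = D ⊆ [0,∞)`
not reduced to a point, `α = inf D ∈ D`, and `h(τ) = max{s ∈ D : τ ∈ ∂ψ(s)}`:
if `d₊ψ(α) ≥ 0` then `g(τ) = h(τ)·τ` is non-decreasing on `ℝ`. -/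
theorem g_monotone_of_dplus_nonneg
    (D : Set ℝ) (ψ : ℝ → ℝ)
    (hD : D ⊆ Set.Ici (0 : ℝ))
    (hint : Convex ℝ D)
    (hne : ∃ a ∈ D, ∃ b ∈ D, a ≠ b)
    (hconv : ConvexOn ℝ D ψ)
    (hlsc : LowerSemicontinuousOn ψ D)
    (hsl : Tendsto (fun s => ψ s / s) (atTop ⊓ Filter.principal D) atTop)
    (α : ℝ) (hα : α = sInf D) (hαD : α ∈ D)
    (hd : (0 : EReal) ≤ dPlus D ψ α)
    (h : ℝ → ℝ)
    (hh : ∀ τ : ℝ, IsGreatest {s : ℝ | s ∈ D ∧ τ ∈ subdiffAt D ψ s} (h τ)) :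
    Monotone (fun τ : ℝ => h τ * τ) := by
  -- basic facts about h
  have hhD : ∀ τ, h τ ∈ D := fun τ => (hh τ).1.1
  have hhsub : ∀ τ, τ ∈ subdiffAt D ψ (h τ) := fun τ => (hh τ).1.2
  have hh0 : ∀ τ, 0 ≤ h τ := fun τ => hD (hhD τ)
  have hα0 : 0 ≤ α := hD hαD
  -- ψ is nondecreasing above α on D, from d₊ψ(α) ≥ 0
  have hψmono : ∀ t ∈ D, α < t → ψ α ≤ ψ t := by
    intro t htD htα
    have hmem : (((ψ t - ψ α) / (t - α) : ℝ) : EReal) ∈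
        ((fun t => (((ψ t - ψ α) / (t - α) : ℝ) : EReal)) '' (D ∩ Set.Ioi α)) :=
      ⟨t, ⟨htD, htα⟩, rfl⟩
    have hle : (0 : EReal) ≤ (((ψ t - ψ α) / (t - α) : ℝ) : EReal) :=
      le_trans hd (sInf_le hmem)
    have hq : (0 : ℝ) ≤ (ψ t - ψ α) / (t - α) := by exact_mod_cast hle
    have ht' : 0 < t - α := by linarith
    have := (le_div_iff₀ ht').mp hq
    linarith
  -- h is monotone
  have hmono : Monotone h := by
    intro τ₁ τ₂ hle
    rcases eq_or_lt_of_le hle with rfl | hlt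
    · exact le_rfl
    · by_contra hcon
      push_neg at hcon
      have h1 := hhsub τ₁ (h τ₂) (hhD τ₂)
      have h2 := hhsub τ₂ (h τ₁) (hhD τ₁)
      nlinarith
  -- for τ < 0, h τ = α
  have hneg : ∀ τ : ℝ, τ < 0 → h τ = α := by
    intro τ hτ
    have hge : α ≤ h τ := by
      rw [hα]
      exact csInf_le ⟨0, fun x hx => hD hx⟩ (hhD τ)
    rcases eq_or_lt_of_le hge with heq | hlt
    · exact heq.symm
    · exfalso
      have hsub := hhsub τ α hαD
      have hψ : ψ α ≤ ψ (h τ) := hψmono _ (hhD τ) hlt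
      nlinarith
  -- conclude
  intro τ₁ τ₂ hle
  simp only
  rcases lt_or_ge τ₂ 0 with h2 | h2
  · have h1 : τ₁ < 0 := lt_of_le_of_lt hle h2
    rw [hneg τ₁ h1, hneg τ₂ h2]
    nlinarith
  · rcases lt_or_ge τ₁ 0 with h1 | h1
    · have : h τ₁ * τ₁ ≤ 0 := mul_nonpos_of_nonneg_of_nonpos (hh0 τ₁) h1.le
      exact le_trans this (mul_nonneg (hh0 τ₂) h2)
    · exact mul_le_mul (hmono hle) hle h1 (hh0 τ₂)
end
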